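/- Let μ = Σ_{j=1}^n a_j δ_{y_j} with distinct y_j ∈ ℝ and a_j ∈ ℂ, and μ̂ = Σ_{l=1}^k â_l δ_{ŷ_l} with distinct ŷ_l ∈ ℝ and â_l ∈ ℂ, and suppose F[μ̂](ω) = F[μ](ω) + w(ω) for all ω ∈ [0, Ω]. Fix j ∈ {1,…,n}, let ŷ_{j'} be a point among the ŷ_l that is closest to y_j, and let S be the finite set consisting of the points y_p for p ≠ j together with those ŷ_l, l ≠ j', that are not equal to any y_p; write s = #S. Then for any ω* with 0 < ω* ≤ Ω/s such that the s+1 numbers e^{i y_j ω*} and e^{i q ω*} (q ∈ S) are pairwise distinct, one has the identity â_{j'} · Π_{q∈S} (e^{i ŷ_{j'} ω*} − e^{i q ω*})/(e^{i y_j ω*} − e^{i q ω*}) = a_j + (w₁ᵀ v) / Π_{q∈S}(e^{i y_j ω*} − e^{i q ω*}), where w₁ = (w(0), w(ω*), …, w(s·ω*))ᵀ ∈ ℂ^{s+1} and v ∈ ℂ^{s+1} is the vector whose m-th entry (m = 1, …, s+1) equals (−1)^{s+1−m} times the elementary symmetric polynomial of degree s+1−m in the s variables e^{i q ω*}, q ∈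 S. -/

import Mathlib

/-!
Put `z t = e^{i t ω*}` and `P(x) = ∏_{q ∈ S} (x - z q)`. By Vieta, the entries of `v` are the
coefficients of `P`, so pairing the data identity at the `s + 1` frequencies `m ω*` with `v`
evaluates `P` at every node: `Σ_l â_l P(z ŷ_l) = Σ_p a_p P(z y_p) + w₁ᵀ v`. Every node except
`y_j` and `ŷ_{j'}` lies in `S` and is annihilated by `P`; dividing by `P(z y_j) ≠ 0` gives the
identity.
-/

open Finset Polynomial

/-- `vietaCoeff S f m` is the coefficient of `X ^ m` in `∏ q ∈ S, (X - f q)`. -/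
def vietaCoeff {σ R : Type*} [CommRing R] (S : Finset σ) (f : σ → R) (m : ℕ) : R :=
  (-1) ^ (#S - m) * ∑ T ∈ S.powersetCard (#S - m), ∏ q ∈ T, f q

section Annihilation

variable {σ R : Type*} [CommRing R]

theorem prod_sub_eq_sum_vietaCoeff (S : Finset σ) (f : σ → R) (x : R) :
    ∏ q ∈ S, (x - f q) = ∑ m ∈ range (#S + 1), vietaCoeff S f m * x ^ m := by
  have hP : ∏ q ∈ S, (X - C (f q)) = ((S.1.map f).map fun t => X - C t).prod := by
    rw [Multiset.map_map]; rfl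
  have hdeg : (∏ q ∈ S, (X - C (f q))).natDegree < #S + 1 := Nat.lt_succ_of_le <|
    (natDegree_prod_le _ _).trans <| by simpa using sum_le_sum fun q _ => natDegree_X_sub_C_le (f q)
  calc ∏ q ∈ S, (x - f q) = (∏ q ∈ S, (X - C (f q))).eval x := by simp [eval_prod]
    _ = ∑ m ∈ range (#S + 1), (∏ q ∈ S, (X - C (f q))).coeff m * x ^ m :=
      eval_eq_sum_range' hdeg x
    _ = ∑ m ∈ range (#S + 1), vietaCoeff S f m * x ^ m := by
      refine sum_congr rfl fun m hm => ?_
      rw [mem_range, Nat.lt_succ_iff] at hm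
      rw [hP, Multiset.prod_X_sub_C_coeff _ (by simpa using hm), Multiset.card_map,
        esymm_map_val]
      rfl

theorem sum_vietaCoeff_mul_powerSum {ι : Type*} [Fintype ι] (S : Finset σ) (f : σ → R)
    (c x : ι → R) :
    ∑ m ∈ range (#S + 1), vietaCoeff S f m * ∑ i, c i * x i ^ m
      = ∑ i, c i * ∏ q ∈ S, (x i - f q) := by
  simp_rw [prod_sub_eq_sum_vietaCoeff, mul_sum]
  rw [sum_comm]
  exact sum_congr rfl fun i _ => sum_congr rfl fun m _ => by ring

theorem sum_mul_prod_sub_of_powerSum_eq {ι κ : Type*} [Fintype ι] [Fintype κ]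
    (S : Finset σ) (f : σ → R) (b : κ → R) (x' : κ → R) (c : ι → R) (x : ι → R) (e : ℕ → R)
    (hpow : ∀ m ≤ #S, ∑ l, b l * x' l ^ m = ∑ i, c i * x i ^ m + e m) :
    ∑ l, b l * ∏ q ∈ S, (x' l - f q)
      = ∑ i, c i * ∏ q ∈ S, (x i - f q) + ∑ m ∈ range (#S + 1), e m * vietaCoeff S f m := by
  rw [← sum_vietaCoeff_mul_powerSum, ← sum_vietaCoeff_mul_powerSum, ← sum_add_distrib]
  refine sum_congr rfl fun m hm => ?_
  rw [hpow m (Nat.lt_succ_iff.mp (mem_range.mp hm))]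
  ring

theorem sum_mul_prod_sub_eq_single {ι : Type*} [Fintype ι] (S : Finset σ) (f : σ → R)
    (c : ι → R) (t : ι → σ) (i₀ : ι) (ht : ∀ i ≠ i₀, t i ∈ S) :
    ∑ i, c i * ∏ q ∈ S, (f (t i) - f q) = c i₀ * ∏ q ∈ S, (f (t i₀) - f q) := by
  refine sum_eq_single i₀ (fun i _ hi => ?_) (by simp)
  rw [prod_eq_zero (ht i hi) (sub_self _), mul_zero]

end Annihilation

noncomputable def otherNodes {n k : ℕ} (y : Fin n → ℝ) (yh : Fin k → ℝ) (j : Fin n) (j' : Fin k) :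
    Finset ℝ :=
  image y (univ.erase j) ∪ image yh ((univ.erase j').filter fun l => ∀ p, yh l ≠ y p)

section OtherNodes

variable {n k : ℕ} {y : Fin n → ℝ} {yh : Fin k → ℝ} {j : Fin n} {j' : Fin k}

theorem y_notMem_otherNodes (hy : Function.Injective y) : y j ∉ otherNodes y yh j j' := by
  simp only [otherNodes, mem_union, mem_image, mem_erase, mem_filter, mem_univ, and_true]
  rintro (⟨p, hpj, hp⟩ | ⟨l, ⟨-, hl⟩, hlj⟩)
  · exact hpj (hy hp)
  · exact hl j hlj

theorem y_mem_otherNodes {p : Fin n} (hp : p ≠ j) : y p ∈ otherNodes y yh j j' :=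
  mem_union_left _ (mem_image_of_mem y (mem_erase.mpr ⟨hp, mem_univ p⟩))

/-- A node `ŷ_l = y_j` would be at distance `0` from `y_j`, hence equal to the closest
node `ŷ_{j'}`. -/
theorem yh_mem_otherNodes (hyh : Function.Injective yh)
    (hj' : ∀ l, |yh j' - y j| ≤ |yh l - y j|) {l : Fin k} (hl : l ≠ j') :
    yh l ∈ otherNodes y yh j j' := by
  by_cases hex : ∃ p, yh l = y p
  · obtain ⟨p, hp⟩ := hex
    refine hp ▸ y_mem_otherNodes fun hpj => hl (hyh ?_)
    have hclose := hj' l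
    rw [hp, hpj, sub_self, abs_zero, abs_nonpos_iff, sub_eq_zero] at hclose
    rw [hp, hpj, hclose]
  · push Not at hex
    exact mem_union_right _
      (mem_image_of_mem yh (mem_filter.mpr ⟨mem_erase.mpr ⟨hl, mem_univ l⟩, hex⟩))

end OtherNodes

theorem Complex.exp_mul_natCast_mul (t ω : ℝ) (m : ℕ) :
    exp (I * t * ((m * ω : ℝ) : ℂ)) = exp (I * t * ω) ^ m := by
  rw [← exp_nat_mul]
  push_cast
  ring_nf

theorem location_amplitude_identity_one
    (n k : ℕ)
    (Ω : ℝ)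
    (y : Fin n → ℝ) (hy : Function.Injective y) (a : Fin n → ℂ)
    (yh : Fin k → ℝ) (hyh : Function.Injective yh) (ah : Fin k → ℂ)
    (w : ℝ → ℂ)
    (hdata : ∀ ω ∈ Set.Icc (0 : ℝ) Ω,
      ∑ l, ah l * Complex.exp (Complex.I * (yh l : ℂ) * (ω : ℂ))
        = ∑ p, a p * Complex.exp (Complex.I * (y p : ℂ) * (ω : ℂ)) + w ω)
    (j : Fin n) (j' : Fin k)
    (hj' : ∀ l, |yh j' - y j| ≤ |yh l - y j|)
    (S : Finset ℝ)
    (hS : S = Finset.image y (Finset.univ.erase j)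
        ∪ Finset.image yh ((Finset.univ.erase j').filter fun l => ∀ p, yh l ≠ y p))
    (s : ℕ) (hs : s = S.card)
    (ωs : ℝ) (hωs0 : 0 < ωs) (hωs1 : ωs ≤ Ω / s)
    (hinj : Set.InjOn (fun t : ℝ => Complex.exp (Complex.I * (t : ℂ) * (ωs : ℂ)))
      (insert (y j) (S : Set ℝ))) :
    ah j' * ∏ q ∈ S,
        ((Complex.exp (Complex.I * (yh j' : ℂ) * (ωs : ℂ))
            - Complex.exp (Complex.I * (q : ℂ) * (ωs : ℂ)))
          / (Complex.exp (Complex.I * (y j : ℂ) * (ωs : ℂ))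
            - Complex.exp (Complex.I * (q : ℂ) * (ωs : ℂ))))
      = a j +
        (∑ m ∈ Finset.range (s + 1),
            w ((m : ℝ) * ωs) *
              ((-1 : ℂ) ^ (s - m) *
                ∑ T ∈ S.powersetCard (s - m),
                  ∏ q ∈ T, Complex.exp (Complex.I * (q : ℂ) * (ωs : ℂ))))
          / ∏ q ∈ S,
              (Complex.exp (Complex.I * (y j : ℂ) * (ωs : ℂ))
                - Complex.exp (Complex.I * (q : ℂ) * (ωs : ℂ))) := by
  subst hs
  change S = otherNodes y yh j j' at hS
  let z : ℝ → ℂ := fun t => Complex.exp (Complex.I * t * ωs)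
  have hSΩ : (#S : ℝ) * ωs ≤ Ω := by
    -- for `S = ∅` the hypothesis reads `ωs ≤ Ω / 0 = 0`
    have hS_pos : 0 < #S := Nat.pos_of_ne_zero fun h0 => by
      simp only [h0, CharP.cast_eq_zero, div_zero] at hωs1
      linarith
    rwa [le_div_iff₀ (by exact_mod_cast hS_pos), mul_comm] at hωs1
  have hpow : ∀ m ≤ #S, ∑ l, ah l * z (yh l) ^ m = ∑ p, a p * z (y p) ^ m + w (m * ωs) := by
    intro m hm
    have hmem : (m : ℝ) * ωs ∈ Set.Icc 0 Ω := ⟨by positivity, le_trans (by gcongr) hSΩ⟩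
    simpa only [Complex.exp_mul_natCast_mul] using hdata _ hmem
  have key := sum_mul_prod_sub_of_powerSum_eq S z ah (fun l => z (yh l)) a (fun p => z (y p))
    (fun m => w (m * ωs)) hpow
  rw [sum_mul_prod_sub_eq_single S z ah yh j' fun l hl => hS ▸ yh_mem_otherNodes hyh hj' hl,
    sum_mul_prod_sub_eq_single S z a y j fun p hp => hS ▸ y_mem_otherNodes hp] at key
  have hyj : y j ∉ S := hS ▸ y_notMem_otherNodes hy
  have hD : ∏ q ∈ S, (z (y j) - z q) ≠ 0 := prod_ne_zero_iff.mpr fun q hq =>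
    sub_ne_zero.mpr fun h => hyj
      (hinj (Set.mem_insert _ _) (Set.mem_insert_of_mem _ hq) h ▸ hq)
  change ah j' * ∏ q ∈ S, ((z (yh j') - z q) / (z (y j) - z q))
    = a j + (∑ m ∈ range (#S + 1), w (m * ωs) * vietaCoeff S z m) / ∏ q ∈ S, (z (y j) - z q)
  rw [prod_div_distrib]
  field_simp
  linear_combination key
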